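/- Let U be a positive càdlàg submartingale of class (D) on [0,T] with deterministic initial value U_0 and set m = E[U_T] ≥ U_0. Define u_m(x) = x - m - m ln(x). Then u_m(E[max U_T]) - u_m(U_0) ≤ E[U_T ln U_T] - E[U_T] ln(E[U_T]), where max U_T = sup_{0≤u≤T} U_u. In particular E[max U_T] is bounded by an increasing function of the Shannon entropy H(U_T) = E[U_T ln U_T] - m ln m plus u_m(U_0). -/

import Mathlib

/-!
Along a dyadic grid, the running maximum `φ` of `U` truncated at a level `c` only moves when `U`
sets a new maximum, so pathwise `φₙ₊₁ - φₙ ≤ Uₙ₊₁ (log φₙ₊₁ - log φₙ)`. Summing by parts,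
`φₙ - u₀` is dominated by `Uₙ log (φₙ / u₀)` minus the discrete stochastic integral of the bounded
nonnegative integrand `log (φₖ / u₀)` against `U`, whose expectation is nonnegative because `U` is a
submartingale. The Fenchel–Young bound `x log y ≤ x log x - x + t y - x log t`, with
`t = m / E[max U_T]`, turns `E[U_T log (φ / u₀)]` into the entropy of `U_T` plus
`m log (E[max U_T] / u₀)`. Refining the grid while raising the truncation level, right-continuity
and monotone convergence replace `E[φ]` by `E[max U_T]`.
-/

open MeasureTheory Filter Set Real Topology

theorem sub_le_mul_log_div_of_le {x y a : ℝ} (hx : 0 < x) (hxy : x ≤ y) (hya : y ≤ a) :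
    y - x ≤ a * log (y / x) := by
  have hy : 0 < y := hx.trans_le hxy
  have hlog : 1 - x / y ≤ log (y / x) := by
    simpa [inv_div] using one_sub_inv_le_log_of_pos (div_pos hy hx)
  have hlog_nonneg : 0 ≤ log (y / x) := log_nonneg ((one_le_div hx).2 hxy)
  calc y - x = y * (1 - x / y) := by field_simp
    _ ≤ y * log (y / x) := mul_le_mul_of_nonneg_left hlog hy.le
    _ ≤ a * log (y / x) := mul_le_mul_of_nonneg_right hya hlog_nonneg

theorem min_max_sub_min_le_mul_log {a b c u : ℝ} (hu : 0 < u) (hub : u ≤ b) (huc : u ≤ c) :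
    min (max b a) c - min b c ≤ a * (log (min (max b a) c / u) - log (min b c / u)) := by
  rcases le_total a b with hab | hba
  · simp [max_eq_left hab]
  · have hx : 0 < min b c := hu.trans_le (le_min hub huc)
    have hy : 0 < min a c := hx.trans_le (min_le_min_right c hba)
    rw [max_eq_right hba, ← log_div (div_pos hy hu).ne' (div_pos hx hu).ne',
      div_div_div_cancel_right₀ hu.ne']
    exact sub_le_mul_log_div_of_le hx (min_le_min_right c hba) (min_le_left a c)

/-- A trajectorial Doob `L log L` inequality. -/
theorem min_partialSups_sub_le {x : ℕ → ℝ} {u c : ℝ} (hu : 0 < u) (hx0 : x 0 = u) (huc : u ≤ c)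
    (n : ℕ) :
    min (partialSups x n) c - u ≤
      x n * log (min (partialSups x n) c / u) -
        ∑ k ∈ Finset.range n, log (min (partialSups x k) c / u) * (x (k + 1) - x k) := by
  induction n with
  | zero => simp [hx0, huc]
  | succ n ih =>
    have hstep := min_max_sub_min_le_mul_log (a := x (n + 1)) hu
      (hx0 ▸ le_partialSups_of_le x (Nat.zero_le n)) huc
    rw [Finset.sum_range_succ, ← Order.succ_eq_add_one, partialSups_succ, Order.succ_eq_add_one]
    linarith

theorem mul_log_le_mul_log_sub_add {a b t : ℝ} (ha : 0 < a) (hb : 0 < b) (ht : 0 < t) :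
    a * log b ≤ a * log a - a + t * b - a * log t := by
  have h := log_le_sub_one_of_pos (show 0 < t * b / a by positivity)
  rw [log_div (by positivity) ha.ne', log_mul ht.ne' hb.ne'] at h
  have h' := mul_le_mul_of_nonneg_left h ha.le
  have hcancel : a * (t * b / a) = t * b := by field_simp
  linarith

theorem IsCompact.bddAbove_image_of_forall_exists_eventually_le {X α : Type*}
    [TopologicalSpace X] [SemilatticeSup α] [Nonempty α] {K : Set X} {f : X → α}
    (hK : IsCompact K) (hf : ∀ x ∈ K, ∃ C, ∀ᶠ y in 𝓝 x, f y ≤ C) : BddAbove (f '' K) := by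
  refine hK.induction_on (p := fun s => BddAbove (f '' s)) (by simp)
    (fun s t hst ht => ht.mono (image_mono hst))
    (fun s t hs ht => by simpa only [image_union] using hs.union ht) fun x hx => ?_
  obtain ⟨C, hC⟩ := hf x hx
  exact ⟨{y | f y ≤ C}, mem_nhdsWithin_of_mem_nhds hC, ⟨C, by rintro _ ⟨y, hy, rfl⟩; exact hy⟩⟩

theorem exists_eventually_le_of_continuousWithinAt_Ici {X : Type*} [TopologicalSpace X]
    [LinearOrder X] [OrderTopology X] {f : X → ℝ} {x : X} {l : ℝ}
    (hr : ContinuousWithinAt f (Ici x) x) (hl : Tendsto f (𝓝[<] x) (𝓝 l)) :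
    ∃ C, ∀ᶠ y in 𝓝 x, f y ≤ C := by
  refine ⟨max (l + 1) (f x + 1), ?_⟩
  rw [← nhdsLT_sup_nhdsGE, eventually_sup]
  exact ⟨(hl.eventually_lt_const (lt_add_one l)).mono fun y hy => hy.le.trans (le_max_left _ _),
    (hr.eventually_lt_const (lt_add_one (f x))).mono fun y hy => hy.le.trans (le_max_right _ _)⟩

noncomputable def dyadic (T : ℝ) (j i : ℕ) : ℝ := i * T / 2 ^ j

section Dyadic

variable {T : ℝ}

@[simp]
theorem dyadic_zero (j : ℕ) : dyadic T j 0 = 0 := by simp [dyadic]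

@[simp]
theorem dyadic_two_pow (j : ℕ) : dyadic T j (2 ^ j) = T := by simp [dyadic]

theorem dyadic_succ_two_mul (j i : ℕ) : dyadic T (j + 1) (2 * i) = dyadic T j i := by
  simp only [dyadic, pow_succ]; push_cast; field_simp

theorem monotone_dyadic (hT : 0 ≤ T) (j : ℕ) : Monotone (dyadic T j) := fun i k hik => by
  unfold dyadic; gcongr

theorem dyadic_mem_Icc (hT : 0 ≤ T) {j i : ℕ} (hi : i ≤ 2 ^ j) : dyadic T j i ∈ Icc 0 T :=
  ⟨by unfold dyadic; positivity, by simpa using monotone_dyadic hT j hi⟩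

theorem exists_dyadic_mem_Icc (hT : 0 ≤ T) {u : ℝ} (hu : u ∈ Icc 0 T) (j : ℕ) :
    ∃ i ≤ 2 ^ j, dyadic T j i ∈ Icc u (u + T / 2 ^ j) := by
  rcases hT.eq_or_lt with rfl | hT
  · exact ⟨0, Nat.zero_le _, by simpa using hu.2, by simpa using hu.1⟩
  have h2j : (0 : ℝ) < 2 ^ j := by positivity
  refine ⟨⌈2 ^ j * u / T⌉₊, ?_, ?_, ?_⟩
  · rw [Nat.ceil_le, div_le_iff₀ hT]
    push_cast
    exact mul_le_mul_of_nonneg_left hu.2 h2j.le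
  · have h := Nat.le_ceil (2 ^ j * u / T)
    rw [div_le_iff₀ hT] at h
    rw [dyadic, le_div_iff₀ h2j]
    linarith
  · have h := Nat.ceil_lt_add_one (div_nonneg (mul_nonneg h2j.le hu.1) hT.le)
    rw [← sub_lt_iff_lt_add, lt_div_iff₀ hT] at h
    rw [dyadic, add_div' _ _ _ h2j.ne', div_le_div_iff_of_pos_right h2j]
    nlinarith

end Dyadic

noncomputable def dyadicMax (f : ℝ → ℝ) (T : ℝ) (j : ℕ) : ℝ :=
  partialSups (fun i => f (dyadic T j i)) (2 ^ j)

section DyadicMax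

variable {f : ℝ → ℝ} {T : ℝ}

theorem monotone_dyadicMax : Monotone (dyadicMax f T) := by
  refine monotone_nat_of_le_succ fun j => partialSups_le _ _ _ fun i hi => ?_
  rw [← dyadic_succ_two_mul]
  exact le_partialSups_of_le (fun i => f (dyadic T (j + 1) i))
    (show 2 * i ≤ 2 ^ (j + 1) by rw [pow_succ]; omega)

theorem apply_zero_le_dyadicMax (j : ℕ) : f 0 ≤ dyadicMax f T j := by
  simpa [dyadicMax] using le_partialSups_of_le (fun i => f (dyadic T j i)) (Nat.zero_le (2 ^ j))

theorem dyadicMax_le (hT : 0 ≤ T) {B : ℝ} (hB : ∀ s ∈ Icc 0 T, f s ≤ B) (j : ℕ) :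
    dyadicMax f T j ≤ B :=
  partialSups_le _ _ _ fun _ hi => hB _ (dyadic_mem_Icc hT hi)

theorem tendsto_dyadicMax (hT : 0 ≤ T) (hf : ∀ t, ContinuousWithinAt f (Ici t) t)
    (hbdd : BddAbove (f '' Icc 0 T)) :
    Tendsto (dyadicMax f T) atTop (𝓝 (⨆ u : Icc 0 T, f u)) := by
  have : Nonempty (Icc 0 T) := ⟨⟨0, le_rfl, hT⟩⟩
  refine tendsto_atTop_isLUB monotone_dyadicMax ⟨?_, fun B hB => ciSup_le fun u => ?_⟩
  · rintro _ ⟨j, rfl⟩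
    exact dyadicMax_le hT (fun s hs => le_ciSup_set hbdd hs) j
  · choose i hi hmem using exists_dyadic_mem_Icc hT u.2
    have hmesh : Tendsto (fun j : ℕ => (u : ℝ) + T / 2 ^ j) atTop (𝓝 u) := by
      simpa using tendsto_const_nhds.add (tendsto_const_nhds.div_atTop
        (tendsto_pow_atTop_atTop_of_one_lt (one_lt_two : (1 : ℝ) < 2)))
    have hgrid : Tendsto (fun j => dyadic T j (i j)) atTop (𝓝[≥] (u : ℝ)) :=
      tendsto_nhdsWithin_iff.2 ⟨tendsto_of_tendsto_of_tendsto_of_le_of_le tendsto_const_nhds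
        hmesh (fun j => (hmem j).1) (fun j => (hmem j).2), .of_forall fun j => (hmem j).1⟩
    refine le_of_tendsto ((hf u).tendsto.comp hgrid) (.of_forall fun j => ?_)
    exact (le_partialSups_of_le (fun i => f (dyadic T j i)) (hi j)).trans (hB ⟨j, rfl⟩)

end DyadicMax

namespace MeasureTheory

variable {Ω : Type*} {m0 : MeasurableSpace Ω} {μ : Measure Ω}

section TimeChange

variable {ι κ : Type*} [Preorder ι] [Preorder κ] {ℱ : Filtration ι m0} {U : ι → Ω → ℝ} {τ : κ → ι}

def Filtration.comp (ℱ : Filtration ι m0) (hτ : Monotone τ) : Filtration κ m0 :=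
  ⟨fun k => ℱ (τ k), fun _ _ h => ℱ.mono (hτ h), fun _ => ℱ.le _⟩

theorem StronglyAdapted.comp (hU : StronglyAdapted ℱ U) (hτ : Monotone τ) :
    StronglyAdapted (ℱ.comp hτ) fun k => U (τ k) :=
  fun k => hU (τ k)

theorem Submartingale.comp (hU : Submartingale U ℱ μ) (hτ : Monotone τ) :
    Submartingale (fun k => U (τ k)) (ℱ.comp hτ) μ :=
  ⟨hU.stronglyAdapted.comp hτ, fun _ _ h => hU.2.1 _ _ (hτ h), fun _ => hU.integrable _⟩

end TimeChange

section DiscreteTime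

variable {𝒢 : Filtration ℕ m0} {X : ℕ → Ω → ℝ} {u c : ℝ}

theorem StronglyAdapted.measurable_partialSups (hX : StronglyAdapted 𝒢 X) (n : ℕ) :
    Measurable[𝒢 n] fun ω => partialSups (X · ω) n := by
  induction n with
  | zero => simpa using (hX 0).measurable
  | succ n ih =>
    simp only [← Order.succ_eq_add_one, partialSups_succ]
    exact (ih.mono (𝒢.mono n.le_succ) le_rfl).max (hX _).measurable

theorem min_partialSups_mem_Icc (hX0 : ∀ ω, X 0 ω = u) (huc : u ≤ c) (n : ℕ) (ω : Ω) :
    min (partialSups (X · ω) n) c ∈ Icc u c :=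
  ⟨le_min (hX0 ω ▸ le_partialSups_of_le (X · ω) (Nat.zero_le n)) huc, min_le_right _ _⟩

theorem log_min_partialSups_div_mem_Icc (hu : 0 < u) (hX0 : ∀ ω, X 0 ω = u) (huc : u ≤ c)
    (n : ℕ) (ω : Ω) : log (min (partialSups (X · ω) n) c / u) ∈ Icc 0 (log (c / u)) := by
  obtain ⟨hum, hmc⟩ := min_partialSups_mem_Icc hX0 huc n ω
  exact ⟨log_nonneg ((one_le_div hu).2 hum),
    log_le_log (div_pos (hu.trans_le hum) hu) (div_le_div_of_nonneg_right hmc hu.le)⟩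

theorem StronglyAdapted.integrable_mul_log_min_partialSups_div (hX : StronglyAdapted 𝒢 X)
    (hu : 0 < u) (hX0 : ∀ ω, X 0 ω = u) (huc : u ≤ c) {Y : Ω → ℝ} (hY : Integrable Y μ)
    (n : ℕ) : Integrable (fun ω => Y ω * log (min (partialSups (X · ω) n) c / u)) μ := by
  refine hY.mul_bdd (c := log (c / u)) ?_ (.of_forall fun ω => ?_)
  · exact ((((hX.measurable_partialSups n).min measurable_const).div_const
      u).log.mono (𝒢.le n) le_rfl).aestronglyMeasurable
  · obtain ⟨h0, h1⟩ := log_min_partialSups_div_mem_Icc hu hX0 huc n ω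
    rwa [norm_of_nonneg h0]

/-- Doob's `L log L` maximal inequality, with the maximum truncated at `c` so that every term
is integrable. -/
theorem Submartingale.integral_min_partialSups_sub_le [IsProbabilityMeasure μ]
    (hX : Submartingale X 𝒢 μ) (hu : 0 < u) (hX0 : ∀ ω, X 0 ω = u) (huc : u ≤ c) (n : ℕ) :
    ∫ ω, min (partialSups (X · ω) n) c ∂μ - u ≤
      ∫ ω, X n ω * log (min (partialSups (X · ω) n) c / u) ∂μ := by
  set ξ : ℕ → Ω → ℝ := fun k ω => log (min (partialSups (X · ω) k) c / u)
  have hξ_adapted : StronglyAdapted 𝒢 ξ := fun k =>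
    ((((hX.stronglyAdapted.measurable_partialSups k).min
      measurable_const).div_const u).log).stronglyMeasurable
  have hξ_bdd : ∀ k ω, ξ k ω ≤ log (c / u) := fun k ω =>
    (log_min_partialSups_div_mem_Icc hu hX0 huc k ω).2
  have hξ_nonneg : ∀ k ω, 0 ≤ ξ k ω := fun k ω =>
    (log_min_partialSups_div_mem_Icc hu hX0 huc k ω).1
  have hI := hX.sum_mul_sub hξ_adapted hξ_bdd hξ_nonneg
  have hI_nonneg : 0 ≤ ∫ ω, (∑ k ∈ Finset.range n, ξ k * (X (k + 1) - X k)) ω ∂μ := by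
    simpa using hI.setIntegral_le (Nat.zero_le n) MeasurableSet.univ
  have hpath : ∀ ω, min (partialSups (X · ω) n) c - u ≤ X n ω * ξ n ω -
      (∑ k ∈ Finset.range n, ξ k * (X (k + 1) - X k)) ω := fun ω => by
    simpa [Finset.sum_apply] using min_partialSups_sub_le hu (hX0 ω) huc n
  have hmin_int : Integrable (fun ω => min (partialSups (X · ω) n) c) μ := by
    refine (integrable_const c).mono' ((((hX.stronglyAdapted.measurable_partialSups
      n).min measurable_const).mono (𝒢.le n) le_rfl).aestronglyMeasurable)
      (.of_forall fun ω => ?_)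
    obtain ⟨hum, hmc⟩ := min_partialSups_mem_Icc hX0 huc n ω
    rwa [norm_of_nonneg (hu.le.trans hum)]
  have hmul_int := hX.stronglyAdapted.integrable_mul_log_min_partialSups_div hu hX0 huc
    (hX.integrable n) n (μ := μ)
  calc ∫ ω, min (partialSups (X · ω) n) c ∂μ - u
      = ∫ ω, (min (partialSups (X · ω) n) c - u) ∂μ := by
        rw [integral_sub hmin_int (integrable_const u)]; simp
    _ ≤ ∫ ω, (X n ω * ξ n ω - (∑ k ∈ Finset.range n, ξ k * (X (k + 1) - X k)) ω) ∂μ :=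
        integral_mono (hmin_int.sub (integrable_const u)) (hmul_int.sub (hI.integrable n)) hpath
    _ ≤ ∫ ω, X n ω * ξ n ω ∂μ := by
        rw [integral_sub hmul_int (hI.integrable n)]; linarith

end DiscreteTime

theorem integral_mul_log_le_of_le [IsProbabilityMeasure μ] {X Y Z : Ω → ℝ}
    (hX : ∀ ω, 0 < X ω) (hZ : ∀ ω, 0 < Z ω) (hZY : ∀ ω, Z ω ≤ Y ω) (hXi : Integrable X μ)
    (hYi : Integrable Y μ) (hXX : Integrable (fun ω => X ω * log (X ω)) μ)
    (hXZ : Integrable (fun ω => X ω * log (Z ω)) μ) :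
    ∫ ω, X ω * log (Z ω) ∂μ ≤
      ∫ ω, X ω * log (X ω) ∂μ - (∫ ω, X ω ∂μ) * log (∫ ω, X ω ∂μ) +
        (∫ ω, X ω ∂μ) * log (∫ ω, Y ω ∂μ) := by
  have pos_integral : ∀ {f : Ω → ℝ}, (∀ ω, 0 < f ω) → Integrable f μ → 0 < ∫ ω, f ω ∂μ :=
    fun hf hfi => (integral_pos_iff_support_of_nonneg (fun ω => (hf ω).le) hfi).2
      (by simp [Function.support_eq_univ fun ω => (hf ω).ne'])
  set m := ∫ ω, X ω ∂μ
  have hm : 0 < m := pos_integral hX hXi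
  have hEY : 0 < ∫ ω, Y ω ∂μ := pos_integral (fun ω => (hZ ω).trans_le (hZY ω)) hYi
  -- the slope for which the Fenchel–Young bound is attained after integration
  set t := m / ∫ ω, Y ω ∂μ
  have ht : 0 < t := div_pos hm hEY
  have hmaj_int : Integrable (fun ω => X ω * log (X ω) - X ω + t * Y ω - X ω * log t) μ :=
    ((hXX.sub hXi).add (hYi.const_mul t)).sub (hXi.mul_const (log t))
  calc ∫ ω, X ω * log (Z ω) ∂μ
      ≤ ∫ ω, (X ω * log (X ω) - X ω + t * Y ω - X ω * log t) ∂μ := by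
        refine integral_mono hXZ hmaj_int fun ω => ?_
        calc X ω * log (Z ω) ≤ X ω * log (Y ω) :=
              mul_le_mul_of_nonneg_left (log_le_log (hZ ω) (hZY ω)) (hX ω).le
          _ ≤ _ := mul_log_le_mul_log_sub_add (hX ω) ((hZ ω).trans_le (hZY ω)) ht
    _ = ∫ ω, X ω * log (X ω) ∂μ - m + t * ∫ ω, Y ω ∂μ - m * log t := by
        rw [integral_sub (f := fun ω => X ω * log (X ω) - X ω + t * Y ω)
            ((hXX.sub hXi).add (hYi.const_mul t)) (hXi.mul_const _),
          integral_add (f := fun ω => X ω * log (X ω) - X ω) (hXX.sub hXi) (hYi.const_mul t),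
          integral_sub hXX hXi, integral_const_mul, integral_mul_const]
    _ = _ := by
        rw [div_mul_cancel₀ _ hEY.ne', log_div hm.ne' hEY.ne']
        ring

section ContinuousTime

variable {ℱ : Filtration ℝ m0} {U : ℝ → Ω → ℝ} {T u c : ℝ}

theorem StronglyAdapted.measurable_dyadicMax (hU : StronglyAdapted ℱ U) (hT : 0 ≤ T) (j : ℕ) :
    Measurable fun ω => dyadicMax (U · ω) T j :=
  ((hU.comp (monotone_dyadic hT j)).measurable_partialSups (2 ^ j)).mono (ℱ.le _) le_rfl

theorem Submartingale.integral_min_dyadicMax_sub_le [IsProbabilityMeasure μ]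
    (hU : Submartingale U ℱ μ) (hT : 0 ≤ T) (hu : 0 < u) (hU0 : ∀ ω, U 0 ω = u) (huc : u ≤ c)
    (hpos : ∀ ω, 0 < U T ω) (hent : Integrable (fun ω => U T ω * log (U T ω)) μ)
    {S : Ω → ℝ} (hUS : ∀ ω, ∀ s ∈ Icc 0 T, U s ω ≤ S ω) (hS : Integrable S μ) (j : ℕ) :
    ∫ ω, min (dyadicMax (U · ω) T j) c ∂μ - u ≤
      ∫ ω, U T ω * log (U T ω) ∂μ - (∫ ω, U T ω ∂μ) * log (∫ ω, U T ω ∂μ) +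
        (∫ ω, U T ω ∂μ) * log ((∫ ω, S ω ∂μ) / u) := by
  have hX := hU.comp (monotone_dyadic hT j)
  have hX0 : ∀ ω, U (dyadic T j 0) ω = u := by simpa using hU0
  have hmax := hX.integral_min_partialSups_sub_le hu hX0 huc (2 ^ j)
  have hint := hX.stronglyAdapted.integrable_mul_log_min_partialSups_div hu hX0 huc
    (hU.integrable T) (2 ^ j)
  simp only [dyadic_two_pow] at hmax hint
  have hgibbs := integral_mul_log_le_of_le hpos
    (fun ω => div_pos (hu.trans_le (min_partialSups_mem_Icc hX0 huc (2 ^ j) ω).1) hu)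
    (fun ω => div_le_div_of_nonneg_right ((min_le_left _ _).trans
      (dyadicMax_le hT (hUS ω) j)) hu.le)
    (hU.integrable T) (hS.div_const u) hent hint
  rw [integral_div] at hgibbs
  exact hmax.trans hgibbs

theorem StronglyAdapted.tendsto_integral_min_dyadicMax (hU : StronglyAdapted ℱ U) (hT : 0 ≤ T)
    (hrc : ∀ ω t, ContinuousWithinAt (U · ω) (Ici t) t)
    (hbdd : ∀ ω, BddAbove ((U · ω) '' Icc 0 T)) (hu : 0 ≤ u) (hU0 : ∀ ω, u ≤ U 0 ω)
    {S : Ω → ℝ} (hS : ∀ ω, S ω = ⨆ s : Icc 0 T, U s ω) (hSint : Integrable S μ) :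
    Tendsto (fun j : ℕ => ∫ ω, min (dyadicMax (U · ω) T j) (u + j) ∂μ) atTop
      (𝓝 (∫ ω, S ω ∂μ)) := by
  have hmax_le : ∀ j ω, dyadicMax (U · ω) T j ≤ S ω := fun j ω =>
    dyadicMax_le hT (fun s hs => (hS ω).symm ▸ le_ciSup_set (hbdd ω) hs) j
  refine integral_tendsto_of_tendsto_of_monotone (fun j => ?_) hSint
    (.of_forall fun ω i j hij => ?_) (.of_forall fun ω => ?_)
  · refine hSint.mono' ((hU.measurable_dyadicMax hT j).min
      measurable_const).aestronglyMeasurable (.of_forall fun ω => ?_)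
    have hnonneg : 0 ≤ min (dyadicMax (U · ω) T j) (u + j) :=
      le_min (hu.trans ((hU0 ω).trans (apply_zero_le_dyadicMax (f := (U · ω)) j))) (by positivity)
    rw [norm_of_nonneg hnonneg]
    exact (min_le_left _ _).trans (hmax_le j ω)
  · exact min_le_min (monotone_dyadicMax hij) (by gcongr)
  · refine ((hS ω).symm ▸ tendsto_dyadicMax hT (hrc ω) (hbdd ω)).congr' ?_
    filter_upwards [tendsto_natCast_atTop_atTop.eventually_ge_atTop (S ω - u)] with j hj
    exact (min_eq_left ((hmax_le j ω).trans (by linarith))).symm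

end ContinuousTime

end MeasureTheory

/-- **Harremoës-type inequality for positive class (D) submartingales.**
If `U` is a positive càdlàg submartingale of class (D) on `[0,T]` with deterministic initial
value `u0`, `m = E[U_T] ≥ u0` and `u_m(x) = x - m - m log x`, then
`u_m(E[max U_T]) - u_m(u0) ≤ E[U_T log U_T] - E[U_T] log (E[U_T])`. -/
theorem harremoes_inequality_submartingale
    {Ω : Type*} {m0 : MeasurableSpace Ω} {μ : Measure Ω} [IsProbabilityMeasure μ]
    (ℱ : Filtration ℝ m0) (U : ℝ → Ω → ℝ) (T : ℝ) (hT : 0 ≤ T)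
    (hsub : Submartingale U ℱ μ)
    (hrc : ∀ ω t, ContinuousWithinAt (fun s => U s ω) (Ici t) t)
    (hll : ∀ ω t, ∃ l : ℝ, Tendsto (fun s => U s ω) (nhdsWithin t (Iio t)) (nhds l))
    (hpos : ∀ t ω, 0 < U t ω)
    (u0 : ℝ) (h0 : ∀ ω, U 0 ω = u0)
    (m : ℝ) (hm : m = ∫ ω, U T ω ∂μ) (hu0m : u0 ≤ m)
    -- class (D) on `[0,T]`, expressed through integrability of the running supremum
    (S : Ω → ℝ) (hS : ∀ ω, S ω = ⨆ u : Icc (0:ℝ) T, U (u : ℝ) ω)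
    (hSint : Integrable S μ)
    (hent : Integrable (fun ω => U T ω * Real.log (U T ω)) μ) :
    ((∫ ω, S ω ∂μ) - m - m * Real.log (∫ ω, S ω ∂μ)) - (u0 - m - m * Real.log u0) ≤
      (∫ ω, U T ω * Real.log (U T ω) ∂μ) - m * Real.log m := by
  obtain ⟨ω₀⟩ := nonempty_of_isProbabilityMeasure μ
  have hu0 : 0 < u0 := h0 ω₀ ▸ hpos 0 ω₀
  have hbdd : ∀ ω, BddAbove ((U · ω) '' Icc 0 T) := fun ω =>
    isCompact_Icc.bddAbove_image_of_forall_exists_eventually_le fun t _ =>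
      let ⟨_, hl⟩ := hll ω t; exists_eventually_le_of_continuousWithinAt_Ici (hrc ω t) hl
  have hUS : ∀ ω, ∀ s ∈ Icc 0 T, U s ω ≤ S ω := fun ω s hs =>
    (hS ω).symm ▸ le_ciSup_set (hbdd ω) hs
  have hES : 0 < ∫ ω, S ω ∂μ := (hu0.trans_le hu0m).trans_le
    (hm ▸ integral_mono (hsub.integrable T) hSint fun ω => hUS ω T ⟨hT, le_rfl⟩)
  -- raising the truncation level with the grid lets a single limit remove both approximations
  have hbound := fun j : ℕ => hsub.integral_min_dyadicMax_sub_le hT hu0 h0 (c := u0 + j)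
    (by simp) (hpos T) hent hUS hSint j
  have hlim := le_of_tendsto' ((hsub.stronglyAdapted.tendsto_integral_min_dyadicMax hT hrc hbdd
    hu0.le (fun ω => (h0 ω).ge) hS hSint).sub_const u0) hbound
  rw [← hm, log_div hES.ne' hu0.ne'] at hlim
  linarith
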